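/- Let $G$ be a chordal graph and let $F_c$ be a leaf of the clique complex $\Delta(G)$ with branches $F_{t_1}, \ldots, F_{t_q}$ ($q \geq 1$). If $G$ is a generalized block graph, then all pairwise intersections among $F_c, F_{t_1}, \ldots, F_{t_q}$ are equal to a common nonempty set $A$, and $A \cap F_l = \emptyset$ for every other maximal clique $F_l$ of $G$; in particular, $A$ is a $(q+1)$-minimal cut set of $G$. -/

import Mathlib

/-!
Branches of the same facet `F_c` meet it in the same set `A`, and the generalized block
condition applied to `F_c, B_j, B_k` forces `B_j ∩ B_k = A` as well. Every maximal clique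
meeting `A` is then `F_c` or a branch, hence contains `A`; so every neighbour of a vertex of
`A` is adjacent to all of `A`, and deleting a proper subset of `A` leaves the graph
connected. Deleting `A` itself separates `F_c \ A` from `B_j \ F_c`, because every other
maximal clique meets `F_c` inside `A`.
-/

open SimpleGraph Set

/-- Number of connected components of the induced subgraph of `G` on `s`. -/
noncomputable def nc {V : Type*} (G : SimpleGraph V) (s : Set V) : ℕ :=
  Nat.card (G.induce s).ConnectedComponent

/-- `T` has the cut point property for `G`: every `i ∈ T` is a cut point of the
induced subgraph on `Tᶜ ∪ {i}` (removing `i` increases the number of components). -/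
def CutPointProperty {V : Type*} (G : SimpleGraph V) (T : Set V) : Prop :=
  ∀ i ∈ T, nc G (Tᶜ ∪ {i}) < nc G Tᶜ

/-- The join `G₁ * G₂` of two graphs on disjoint vertex sets. -/
def joinGraph {V₁ V₂ : Type*} (G₁ : SimpleGraph V₁) (G₂ : SimpleGraph V₂) :
    SimpleGraph (V₁ ⊕ V₂) where
  Adj v w :=
    match v, w with
    | Sum.inl a, Sum.inl b => G₁.Adj a b
    | Sum.inr a, Sum.inr b => G₂.Adj a b
    | Sum.inl _, Sum.inr _ => True
    | Sum.inr _, Sum.inl _ => True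
  symm := ⟨by rintro (a | a) (b | b) h <;> simp_all <;> exact h.symm⟩
  loopless := ⟨by rintro (a | a) h <;> simp_all⟩

/-- Disjoint union of an indexed family of graphs. -/
def sigmaGraph {ι : Type*} {V : ι → Type*} (G : ∀ i, SimpleGraph (V i)) :
    SimpleGraph (Σ i, V i) where
  Adj v w := ∃ h : v.1 = w.1, (G w.1).Adj (h ▸ v.2) w.2
  symm := by
    refine ⟨?_⟩
    rintro ⟨i, a⟩ ⟨j, b⟩ ⟨h, hab⟩
    dsimp at h hab ⊢
    subst h
    exact ⟨rfl, hab.symm⟩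
  loopless := by
    refine ⟨?_⟩
    rintro ⟨i, a⟩ ⟨h, hab⟩
    dsimp at h hab
    exact (G i).irrefl hab
/-- The corona `H ⊙ H'`: one copy of `H'` for each vertex `v` of `H`,
with every vertex of the copy joined to `v`. -/
def coronaGraph {V₁ V₂ : Type*} (H : SimpleGraph V₁) (H' : SimpleGraph V₂) :
    SimpleGraph (V₁ ⊕ V₁ × V₂) where
  Adj v w :=
    match v, w with
    | Sum.inl a, Sum.inl b => H.Adj a b
    | Sum.inl a, Sum.inr p => a = p.1
    | Sum.inr p, Sum.inl b => p.1 = b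
    | Sum.inr p, Sum.inr q => p.1 = q.1 ∧ H'.Adj p.2 q.2
  symm := by
    refine ⟨?_⟩
    rintro (a | p) (b | q) h <;> dsimp at h ⊢
    · exact h.symm
    · exact h.symm
    · exact h.symm
    · exact ⟨h.1.symm, h.2.symm⟩
  loopless := ⟨by rintro (a | p) h <;> simp_all⟩

/-- The whisker graph `W(H)`: a pendant vertex attached to each vertex of `H`. -/
def whiskerGraph {V : Type*} (H : SimpleGraph V) : SimpleGraph (V ⊕ V) where
  Adj v w :=
    match v, w with
    | Sum.inl a, Sum.inl b => H.Adj a b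
    | Sum.inl a, Sum.inr b => a = b
    | Sum.inr a, Sum.inl b => a = b
    | Sum.inr _, Sum.inr _ => False
  symm := ⟨by rintro (a | a) (b | b) h <;> simp_all; exact h.symm⟩
  loopless := ⟨by rintro (a | a) h <;> simp_all⟩

/-- `F` is (the vertex set of) a maximal clique of `G`. -/
def MaxClique {V : Type*} (G : SimpleGraph V) (F : Set V) : Prop :=
  Maximal G.IsClique F

/-- A graph is chordal if every cycle of length at least 4 has a chord. -/
def IsChordal {V : Type*} (G : SimpleGraph V) : Prop :=
  ∀ (n : ℕ), 4 ≤ n → ∀ c : ℕ → V, Set.InjOn c (Set.Iio n) →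
    (∀ i < n, G.Adj (c i) (c ((i + 1) % n))) →
    ∃ i < n, ∃ j < n, j ≠ i ∧ j ≠ (i + 1) % n ∧ i ≠ (j + 1) % n ∧ G.Adj (c i) (c j)

/-- A generalized block graph: a connected chordal graph in which any three distinct
maximal cliques with nonempty common intersection have all pairwise intersections equal. -/
def GenBlockGraph {V : Type*} (G : SimpleGraph V) : Prop :=
  G.Connected ∧ IsChordal G ∧
    ∀ F₁ F₂ F₃ : Set V, MaxClique G F₁ → MaxClique G F₂ → MaxClique G F₃ →
      F₁ ≠ F₂ → F₁ ≠ F₃ → F₂ ≠ F₃ → (F₁ ∩ F₂ ∩ F₃).Nonempty →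
      F₁ ∩ F₂ = F₁ ∩ F₃ ∧ F₁ ∩ F₂ = F₂ ∩ F₃

/-- `A` is a cut set of `G`: deleting `A` increases the number of connected components. -/
def IsCutSet {V : Type*} (G : SimpleGraph V) (A : Set V) : Prop :=
  nc G Set.univ < nc G Aᶜ

/-- `A` is an inclusion-minimal cut set of `G`. -/
def IsMinCutSet {V : Type*} (G : SimpleGraph V) (A : Set V) : Prop :=
  IsCutSet G A ∧ ∀ B ⊂ A, ¬ IsCutSet G B

/-- `A` is a `t`-minimal cut set of `G`: a minimal cut set which is the common
intersection of exactly `t` maximal cliques of `G` and disjoint from all other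
maximal cliques. -/
def IsTMinCut {V : Type*} (G : SimpleGraph V) (t : ℕ) (A : Set V) : Prop :=
  IsMinCutSet G A ∧
  {F : Set V | MaxClique G F ∧ A ⊆ F}.ncard = t ∧
  ⋂₀ {F : Set V | MaxClique G F ∧ A ⊆ F} = A ∧
  ∀ F : Set V, MaxClique G F → ¬ A ⊆ F → F ∩ A = ∅

/-- `B` is a branch of the facet `F` in the clique complex of `G`. -/
def IsBranch {V : Type*} (G : SimpleGraph V) (F B : Set V) : Prop :=
  MaxClique G B ∧ B ≠ F ∧ ∀ H : Set V, MaxClique G H → H ≠ F → H ∩ F ⊆ B ∩ F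

/-- `F` is a leaf of the clique complex of `G`. -/
def IsLeafClique {V : Type*} (G : SimpleGraph V) (F : Set V) : Prop :=
  MaxClique G F ∧ ((∀ F' : Set V, MaxClique G F' → F' = F) ∨ ∃ B, IsBranch G F B)

namespace SimpleGraph

variable {V W : Type*} {G : SimpleGraph V}

lemma Reachable.mem_of_forall_adj {S : Set V} (hS : ∀ u v, G.Adj u v → u ∈ S → v ∈ S)
    {u v : V} (h : G.Reachable u v) (hu : u ∈ S) : v ∈ S := by
  rw [reachable_iff_reflTransGen] at h
  induction h with
  | refl => exact hu
  | tail _ hadj ih => exact hS _ _ hadj ih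

lemma Reachable.map_of_forall_adj {H : SimpleGraph W} (f : V → W)
    (hf : ∀ u v, G.Adj u v → f u = f v ∨ H.Adj (f u) (f v)) {u v : V}
    (h : G.Reachable u v) : H.Reachable (f u) (f v) := by
  rw [reachable_iff_reflTransGen] at h ⊢
  refine Relation.ReflTransGen.lift' f (fun a b hab => ?_) _ _ h
  rcases hf a b hab with heq | hadj
  · change Relation.ReflTransGen H.Adj (f a) (f b)
    rw [heq]
  · exact Relation.ReflTransGen.single hadj

end SimpleGraph

section Components

variable {V : Type*} {G : SimpleGraph V}

lemma nc_eq_one_of_connected {s : Set V} (h : (G.induce s).Connected) : nc G s = 1 := by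
  have := h.nonempty
  have := h.preconnected.subsingleton_connectedComponent
  exact Nat.card_unique

lemma nc_univ_eq_one (h : G.Connected) : nc G univ = 1 :=
  nc_eq_one_of_connected ((induceUnivIso G).connected_iff.mpr h)

lemma isCutSet_of_not_reachable [Finite V] (hG : G.Connected) {A : Set V} {x y : ↥Aᶜ}
    (h : ¬ (G.induce Aᶜ).Reachable x y) : IsCutSet G A := by
  have : Nontrivial (G.induce Aᶜ).ConnectedComponent :=
    ⟨_, _, fun hxy => h (ConnectedComponent.exact hxy)⟩
  rw [IsCutSet, nc_univ_eq_one hG]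
  exact Finite.one_lt_card_iff_nontrivial.mpr this

end Components

section MaxCliques

variable {V : Type*} {G : SimpleGraph V}

lemma MaxClique.eq_of_subset {F F' : Set V} (hF : MaxClique G F) (hF' : MaxClique G F')
    (h : F ⊆ F') : F = F' :=
  h.antisymm (hF.2 hF'.1 h)

lemma exists_maxClique_of_adj [Finite V] {u v : V} (h : G.Adj u v) :
    ∃ F, MaxClique G F ∧ u ∈ F ∧ v ∈ F := by
  obtain ⟨F, hsub, hF⟩ := Finite.exists_le_maximal (isClique_pair.mpr fun _ => h)
  exact ⟨F, hF, hsub (mem_insert u _), hsub (mem_insert_of_mem u rfl)⟩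

lemma sInter_maxClique_supset_inter {F₁ F₂ : Set V} (h₁ : MaxClique G F₁)
    (h₂ : MaxClique G F₂) : ⋂₀ {F | MaxClique G F ∧ F₁ ∩ F₂ ⊆ F} = F₁ ∩ F₂ :=
  subset_antisymm (fun _ hw => ⟨hw _ ⟨h₁, inter_subset_left⟩, hw _ ⟨h₂, inter_subset_right⟩⟩)
    (subset_sInter fun _ hF => hF.2)

/-- No edge leaves `F` outside `A`, since the maximal clique through such an edge
would meet `F` outside `A`. -/
lemma not_reachable_induce_compl [Finite V] {F A : Set V}
    (hA : ∀ H, MaxClique G H → H ≠ F → H ∩ F ⊆ A) {x y : ↥Aᶜ} (hx : x.1 ∈ F)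
    (hy : y.1 ∉ F) : ¬ (G.induce Aᶜ).Reachable x y := by
  refine fun h => hy (h.mem_of_forall_adj (S := {v : ↥Aᶜ | v.1 ∈ F}) (fun u v huv hu => ?_) hx)
  obtain ⟨H, hH, huH, hvH⟩ := exists_maxClique_of_adj (G := G) huv
  by_contra hv
  exact u.2 (hA H hH (fun hHF => hv (hHF ▸ hvH)) ⟨huH, hu⟩)

lemma IsBranch.isCutSet_inter [Finite V] (hG : G.Connected) {F B : Set V}
    (hF : MaxClique G F) (hB : IsBranch G F B) : IsCutSet G (F ∩ B) := by
  obtain ⟨x, hxF, hxB⟩ := not_subset.mp fun h => hB.2.1 (hF.eq_of_subset hB.1 h).symm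
  obtain ⟨y, hyB, hyF⟩ := not_subset.mp fun h => hB.2.1 (hB.1.eq_of_subset hF h)
  refine isCutSet_of_not_reachable hG (x := ⟨x, fun h => hxB h.2⟩)
    (y := ⟨y, fun h => hyF h.1⟩) (not_reachable_induce_compl (fun H hH hHF => ?_) hxF hyF)
  rw [inter_comm F B]
  exact hB.2.2 H hH hHF

lemma IsBranch.inter_eq {F B₁ B₂ : Set V} (h₁ : IsBranch G F B₁) (h₂ : IsBranch G F B₂) :
    F ∩ B₁ = F ∩ B₂ := by
  rw [inter_comm F B₁, inter_comm F B₂]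
  exact (h₂.2.2 B₁ h₁.1 h₁.2.1).antisymm (h₁.2.2 B₂ h₂.1 h₂.2.1)

lemma adj_of_forall_maxClique_subset [Finite V] {A : Set V}
    (hA : ∀ F, MaxClique G F → (F ∩ A).Nonempty → A ⊆ F) {u z a : V} (huz : G.Adj u z)
    (hz : z ∈ A) (ha : a ∈ A) (hua : u ≠ a) : G.Adj u a := by
  obtain ⟨F, hF, huF, hzF⟩ := exists_maxClique_of_adj huz
  exact hF.1 huF (hA F hF ⟨z, hzF, hz⟩ ha) hua

/-- Deleting only part of `A` keeps the graph connected: every vertex of `C` can be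
replaced by a surviving vertex `a ∈ A \ C`, which is adjacent to all neighbours of `A`. -/
lemma connected_induce_compl_of_ssubset [Finite V] (hG : G.Connected) {A C : Set V}
    (hA : ∀ F, MaxClique G F → (F ∩ A).Nonempty → A ⊆ F) (hC : C ⊂ A) :
    (G.induce Cᶜ).Connected := by
  classical
  obtain ⟨a, haA, haC⟩ := exists_of_ssubset hC
  let f : V → ↥Cᶜ := fun v => if hv : v ∈ C then ⟨a, haC⟩ else ⟨v, hv⟩
  have hf : ∀ u v, G.Adj u v → f u = f v ∨ (G.induce Cᶜ).Adj (f u) (f v) := by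
    intro u v huv
    by_cases hu : u ∈ C <;> by_cases hv : v ∈ C <;> simp only [f, hu, hv, dite_true, dite_false]
    · exact Or.inl trivial
    · rcases eq_or_ne v a with rfl | hva
      · exact Or.inl rfl
      · exact Or.inr (adj_of_forall_maxClique_subset hA huv.symm (hC.1 hu) haA hva).symm
    · rcases eq_or_ne u a with rfl | hua
      · exact Or.inl rfl
      · exact Or.inr (adj_of_forall_maxClique_subset hA huv (hC.1 hv) haA hua)
    · exact Or.inr huv
  refine (connected_iff _).mpr ⟨fun u v => ?_, ⟨⟨a, haC⟩⟩⟩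
  have hfu : ∀ w : ↥Cᶜ, f w = w := fun w => dif_neg w.2
  simpa only [hfu] using (hG.preconnected u v).map_of_forall_adj f hf

lemma not_isCutSet_of_ssubset [Finite V] (hG : G.Connected) {A C : Set V}
    (hA : ∀ F, MaxClique G F → (F ∩ A).Nonempty → A ⊆ F) (hC : C ⊂ A) : ¬ IsCutSet G C := by
  rw [IsCutSet, nc_univ_eq_one hG, nc_eq_one_of_connected
    (connected_induce_compl_of_ssubset hG hA hC)]
  exact lt_irrefl 1

end MaxCliques

lemma GenBlockGraph.inter_eq_of_inter_eq {V : Type*} {G : SimpleGraph V} (hG : GenBlockGraph G)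
    {F F₁ F₂ : Set V} (hF : MaxClique G F) (h₁ : MaxClique G F₁) (h₂ : MaxClique G F₂)
    (h₁F : F₁ ≠ F) (h₂F : F₂ ≠ F) (h₁₂ : F₁ ≠ F₂) (hne : (F ∩ F₁).Nonempty)
    (h : F ∩ F₁ = F ∩ F₂) : F₁ ∩ F₂ = F ∩ F₁ := by
  have hcommon : F ∩ F₁ ∩ F₂ = F ∩ F₁ := inter_eq_left.mpr (h ▸ inter_subset_right)
  exact (hG.2.2 F F₁ F₂ hF h₁ h₂ h₁F.symm h₂F.symm h₁₂ (by rwa [hcommon])).2.symm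

section LeafBranches

variable {V : Type*} {G : SimpleGraph V} {Fc A : Set V} {q : ℕ} {B : Fin q → Set V}

lemma eq_or_eq_of_inter_nonempty
    (hBall : ∀ F : Set V, MaxClique G F → F ≠ Fc → ((F ∩ Fc).Nonempty ↔ ∃ j, F = B j))
    (hAFc : A ⊆ Fc) {F : Set V} (hF : MaxClique G F) (h : (F ∩ A).Nonempty) :
    F = Fc ∨ ∃ j, F = B j :=
  or_iff_not_imp_left.mpr fun hne => (hBall F hF hne).mp (h.mono (inter_subset_inter_right F hAFc))

lemma subset_of_inter_nonempty
    (hBall : ∀ F : Set V, MaxClique G F → F ≠ Fc → ((F ∩ Fc).Nonempty ↔ ∃ j, F = B j))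
    (hAFc : A ⊆ Fc) (hAB : ∀ j, A ⊆ B j) {F : Set V} (hF : MaxClique G F)
    (h : (F ∩ A).Nonempty) : A ⊆ F := by
  rcases eq_or_eq_of_inter_nonempty hBall hAFc hF h with rfl | ⟨j, rfl⟩
  exacts [hAFc, hAB j]

lemma setOf_maxClique_supset_eq
    (hBall : ∀ F : Set V, MaxClique G F → F ≠ Fc → ((F ∩ Fc).Nonempty ↔ ∃ j, F = B j))
    (hFc : MaxClique G Fc) (hB : ∀ j, MaxClique G (B j)) (hAFc : A ⊆ Fc)
    (hAB : ∀ j, A ⊆ B j) (hA : A.Nonempty) :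
    {F | MaxClique G F ∧ A ⊆ F} = insert Fc (range B) := by
  ext F
  refine ⟨fun ⟨hF, hAF⟩ => ?_, ?_⟩
  · rcases eq_or_eq_of_inter_nonempty hBall hAFc hF (hA.mono (subset_inter hAF subset_rfl))
      with rfl | ⟨j, rfl⟩
    exacts [mem_insert _ _, mem_insert_of_mem _ (mem_range_self j)]
  · rintro (rfl | ⟨j, rfl⟩)
    exacts [⟨hFc, hAFc⟩, ⟨hB j, hAB j⟩]

end LeafBranches

theorem stmt16_general {V : Type*} [Fintype V] (G : SimpleGraph V)
    (hG : GenBlockGraph G)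
    (Fc : Set V) (hFc : IsLeafClique G Fc)
    {q : ℕ} (hq : 1 ≤ q) (B : Fin q → Set V) (hBinj : Function.Injective B)
    (hBbr : ∀ j, IsBranch G Fc (B j))
    (hBall : ∀ F : Set V, MaxClique G F → F ≠ Fc →
      ((F ∩ Fc).Nonempty ↔ ∃ j, F = B j)) :
    ∃ A : Set V, A.Nonempty ∧
      (∀ j, Fc ∩ B j = A) ∧
      (∀ j k, j ≠ k → B j ∩ B k = A) ∧
      (∀ F : Set V, MaxClique G F → F ≠ Fc → (∀ j, F ≠ B j) → F ∩ A = ∅) ∧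
      IsTMinCut G (q + 1) A := by
  obtain ⟨hFc, -⟩ := hFc
  have hB : ∀ j, MaxClique G (B j) := fun j => (hBbr j).1
  have hBFc : ∀ j, B j ≠ Fc := fun j => (hBbr j).2.1
  set j₀ : Fin q := ⟨0, hq⟩
  set A := Fc ∩ B j₀
  have hFcB : ∀ j, Fc ∩ B j = A := fun j => (hBbr j).inter_eq (hBbr j₀)
  have hAFc : A ⊆ Fc := inter_subset_left
  have hAB : ∀ j, A ⊆ B j := fun j => hFcB j ▸ inter_subset_right
  have hAne : A.Nonempty := by
    simpa only [inter_comm] using (hBall _ (hB j₀) (hBFc j₀)).mpr ⟨j₀, rfl⟩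
  have hsub : ∀ F, MaxClique G F → (F ∩ A).Nonempty → A ⊆ F :=
    fun _ => subset_of_inter_nonempty hBall hAFc hAB
  refine ⟨A, hAne, hFcB, fun j k hjk => ?_, fun F hF hFFc hFB => ?_,
    ⟨(hBbr j₀).isCutSet_inter hG.1 hFc, fun C hC => not_isCutSet_of_ssubset hG.1 hsub hC⟩,
    ?_, sInter_maxClique_supset_inter hFc (hB j₀), fun F hF hAF => ?_⟩
  · exact (hG.inter_eq_of_inter_eq hFc (hB j) (hB k) (hBFc j) (hBFc k) (hBinj.ne hjk)
      (hFcB j ▸ hAne) ((hFcB j).trans (hFcB k).symm)).trans (hFcB j)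
  · refine not_nonempty_iff_eq_empty.mp fun h => ?_
    rcases eq_or_eq_of_inter_nonempty hBall hAFc hF h with rfl | ⟨j, rfl⟩
    exacts [hFFc rfl, hFB j rfl]
  · rw [setOf_maxClique_supset_eq hBall hFc hB hAFc hAB hAne,
      ncard_insert_of_notMem (by rintro ⟨j, hj⟩; exact hBFc j hj),
      ncard_range_of_injective hBinj, Nat.card_fin]
  · exact not_nonempty_iff_eq_empty.mp fun h => hAF (hsub F hF h)

/-- in a generalized block graph, a leaf clique `F_c` together with its
branches `B 0, …, B (q-1)` have all pairwise intersections equal to a common nonempty set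
`A`, disjoint from all other maximal cliques; `A` is a `(q+1)`-minimal cut set. -/
theorem stmt16 {V : Type*} [Fintype V] (G : SimpleGraph V)
    (hG : GenBlockGraph G)
    (Fc : Set V) (hFc : IsLeafClique G Fc)
    (hother : ∃ F : Set V, MaxClique G F ∧ F ≠ Fc)
    {q : ℕ} (hq : 1 ≤ q) (B : Fin q → Set V) (hBinj : Function.Injective B)
    (hBbr : ∀ j, IsBranch G Fc (B j))
    (hBall : ∀ F : Set V, MaxClique G F → F ≠ Fc →
      ((F ∩ Fc).Nonempty ↔ ∃ j, F = B j)) :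
    ∃ A : Set V, A.Nonempty ∧
      (∀ j, Fc ∩ B j = A) ∧
      (∀ j k, j ≠ k → B j ∩ B k = A) ∧
      (∀ F : Set V, MaxClique G F → F ≠ Fc → (∀ j, F ≠ B j) → F ∩ A = ∅) ∧
      IsTMinCut G (q + 1) A :=
  stmt16_general G hG Fc hFc hq B hBinj hBbr hBall
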